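/- Uniform convergence of rescaled means along the array: for every integer r ≥ 0, sup over x ∈ [0,1] of |E[K⁽ⁿ⁾_{r,⌊xn⌋}]/n − m_r(x)| tends to 0 as n → ∞. -/

import Mathlib

open MeasureTheory ProbabilityTheory Filter Set Topology

noncomputable section

/-- At step `h`, the new element creates a new block: the number of blocks (index `0`)
and the number of singleton blocks (index `1`) increase by one, all other counts unchanged. -/
def IsNewBlock {Ω : Type*} (K : ℕ → ℕ → ℕ → Ω → ℤ) (n h : ℕ) (ω : Ω) : Prop :=
  K n 0 h ω = K n 0 (h - 1) ω + 1 ∧ K n 1 h ω = K n 1 (h - 1) ω + 1 ∧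
    ∀ r, 2 ≤ r → K n r h ω = K n r (h - 1) ω

/-- At step `h`, a block of size `s` grows to size `s + 1`. -/
def IsGrowth {Ω : Type*} (K : ℕ → ℕ → ℕ → Ω → ℤ) (n s h : ℕ) (ω : Ω) : Prop :=
  K n s h ω = K n s (h - 1) ω - 1 ∧ K n (s + 1) h ω = K n (s + 1) (h - 1) ω + 1 ∧
    ∀ r, r ≠ s → r ≠ s + 1 → K n r h ω = K n r (h - 1) ω

/-- The Chinese-restaurant array with parameters `(a, θ = lam * n)`:
`K n r h` is the number of blocks of size `r` (for `r ≥ 1`), resp. the total number of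
blocks (for `r = 0`), of the Ewens–Pitman random partition of `{1, …, h}` with
parameters `(a, lam * n)`, built sequentially. -/
structure CRPArray (a lam : ℝ) (Ω : Type*) [MeasurableSpace Ω] where
  P : Measure Ω
  isProb : IsProbabilityMeasure P
  K : ℕ → ℕ → ℕ → Ω → ℤ
  F : ℕ → ℕ → MeasurableSpace Ω
  F_eq : ∀ n h, F n h =
    ⨆ r : ℕ, ⨆ k ∈ Finset.Icc 1 h, MeasurableSpace.comap (K n r k) ⊤
  F_le : ∀ n h, F n h ≤ (inferInstance : MeasurableSpace Ω)
  K_zero : ∀ n r ω, K n r 0 ω = 0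
  K_init_blocks : ∀ n ω, K n 0 1 ω = 1
  K_init_one : ∀ n ω, K n 1 1 ω = 1
  K_init_big : ∀ n r, 2 ≤ r → ∀ ω, K n r 1 ω = 0
  step : ∀ n, 1 ≤ n → ∀ h, 2 ≤ h → h ≤ n → ∀ᵐ ω ∂P,
    IsNewBlock K n h ω ∨ ∃ s, 1 ≤ s ∧ s ≤ h - 1 ∧ IsGrowth K n s h ω
  condNew : ∀ n, 1 ≤ n → ∀ h, 2 ≤ h → h ≤ n →
    MeasureTheory.condExp (F n (h - 1)) P
        (Set.indicator {ω | IsNewBlock K n h ω} fun _ => (1 : ℝ))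
      =ᵐ[P] fun ω => (a * (K n 0 (h - 1) ω : ℝ) + lam * n) / (lam * n + (h : ℝ) - 1)
  condGrowth : ∀ n, 1 ≤ n → ∀ h, 2 ≤ h → h ≤ n → ∀ s, 1 ≤ s → s ≤ h - 1 →
    MeasureTheory.condExp (F n (h - 1)) P
        (Set.indicator {ω | IsGrowth K n s h ω} fun _ => (1 : ℝ))
      =ᵐ[P] fun ω => ((s : ℝ) - a) * (K n s (h - 1) ω : ℝ) / (lam * n + (h : ℝ) - 1)

/-- The limit function `m_r(x)`; `mFun a lam r 1` is the constant `𝔪_r`. -/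
def mFun (a lam : ℝ) (r : ℕ) (x : ℝ) : ℝ :=
  if r = 0 then
    if a = 0 then lam * Real.log ((lam + x) / lam)
    else (lam / a) * (((lam + x) / lam) ^ a - 1)
  else ((∏ i ∈ Finset.range (r - 1), (1 - a + (i : ℝ))) / (r.factorial : ℝ)) *
      x ^ r * lam ^ (1 - a) * (x + lam) ^ (a - (r : ℝ))

/-- `c_r = (1 - a)_{r↑} / r!`. -/
def cCoef (a : ℝ) (r : ℕ) : ℝ :=
  (∏ i ∈ Finset.range r, (1 - a + (i : ℝ))) / (r.factorial : ℝ)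

/-- `a_r(x) = ((lam + x)/lam)^(r - a)`. -/
def aFun (a lam : ℝ) (r : ℕ) (x : ℝ) : ℝ := ((lam + x) / lam) ^ ((r : ℝ) - a)

/-- Limit one-step probabilities `p̄_r(x)`. -/
def pbar (a lam : ℝ) (r : ℕ) (x : ℝ) : ℝ :=
  if r ≤ 1 then ((lam + x) / lam) ^ (a - 1)
  else cCoef a (r - 1) * lam ^ (1 - a) * x ^ (r - 1) * (x + lam) ^ (a - (r : ℝ))

/-- Limit one-step probabilities `q̄_r(x)`. -/
def qbar (a lam : ℝ) (r : ℕ) (x : ℝ) : ℝ :=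
  if r = 0 then 0 else cCoef a r * lam ^ (1 - a) * x ^ r * (x + lam) ^ (a - (r : ℝ) - 1)

/-- `P̄_{i,j}(x)` for `1 ≤ i ≤ j`. -/
def Pbar (a lam : ℝ) (i j : ℕ) (x : ℝ) : ℝ :=
  if j = i ∨ (i = 1 ∧ j = 2) then pbar a lam (i - 1) x + qbar a lam (i - 1) x
  else if j = i + 1 then -qbar a lam (i - 1) x
  else 0

/-- The symmetric family of functions `f_{i,j}(x)`. -/
def fEntry (a lam : ℝ) (i j : ℕ) (x : ℝ) : ℝ :=
  aFun a lam (min i j - 1) x * aFun a lam (max i j - 1) x *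
    (Pbar a lam (min i j) (max i j) x -
      (pbar a lam (min i j - 1) x - qbar a lam (min i j - 1) x) *
        (pbar a lam (max i j - 1) x - qbar a lam (max i j - 1) x))

/-- The limiting covariance matrix entries `Σ_{i,j}`, `1 ≤ i, j ≤ d + 1`. -/
def SigmaMat (a lam : ℝ) (i j : ℕ) : ℝ :=
  ((lam + 1) / lam) ^ ((i : ℝ) + (j : ℝ) - 2 - 2 * a) * ∫ x in (0:ℝ)..1, fEntry a lam i j x

/-- One-step conditional probability `p^{(n)}_{r, j}` of increasing `K n r`. -/
def pProc {Ω : Type*} (K : ℕ → ℕ → ℕ → Ω → ℤ) (a lam : ℝ) (n r j : ℕ) (ω : Ω) : ℝ :=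
  if r ≤ 1 then (a * (K n 0 j ω : ℝ) + lam * n) / (lam * n + j)
  else ((r : ℝ) - 1 - a) * (K n (r - 1) j ω : ℝ) / (lam * n + j)

/-- One-step conditional probability `q^{(n)}_{r, j}` of decreasing `K n r`. -/
def qProc {Ω : Type*} (K : ℕ → ℕ → ℕ → Ω → ℤ) (a lam : ℝ) (n r j : ℕ) (ω : Ω) : ℝ :=
  if r = 0 then 0 else ((r : ℝ) - a) * (K n r j ω : ℝ) / (lam * n + j)

/-- `a^{(n)}_{r,h} = ∏_{k=1}^{h-1} (lam n + k)/(lam n + k - r + a)`. -/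
def aCoef (a lam : ℝ) (n r h : ℕ) : ℝ :=
  ∏ k ∈ Finset.range (h - 1),
    (lam * n + ((k : ℝ) + 1)) / (lam * n + ((k : ℝ) + 1) - (r : ℝ) + a)

/-- `β^{(n)}_{r,k}`. -/
def betaProc {Ω : Type*} (K : ℕ → ℕ → ℕ → Ω → ℤ) (a lam : ℝ) (n r k : ℕ) (ω : Ω) : ℝ :=
  if r = 0 then lam * n / (lam * n + (k : ℝ)) else pProc K a lam n r k ω

/-- `A^{(n)}_{r,h} = Σ_{k=1}^{h-1} a^{(n)}_{r,k+1} β^{(n)}_{r,k}`. -/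
def Acomp {Ω : Type*} (K : ℕ → ℕ → ℕ → Ω → ℤ) (a lam : ℝ) (n r h : ℕ) (ω : Ω) : ℝ :=
  ∑ k ∈ Finset.range (h - 1), aCoef a lam n r (k + 2) * betaProc K a lam n r (k + 1) ω

/-- The compensated rescaled block counts `M^{(n)}_{r,h}`. -/
def Mart {Ω : Type*} (K : ℕ → ℕ → ℕ → Ω → ℤ) (a lam : ℝ) (n r h : ℕ) (ω : Ω) : ℝ :=
  aCoef a lam n r h * (K n r h ω : ℝ) - Acomp K a lam n r h ω


namespace EPaux


lemma log_ratio_le (z : ℝ) (hz : 0 < z) : Real.log ((z+1)/z) ≤ 1/z := by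
  have h1 : (0:ℝ) < (z+1)/z := by positivity
  have h2 := Real.log_le_sub_one_of_pos h1
  have h3 : (z+1)/z - 1 = 1/z := by field_simp; ring
  linarith

lemma le_log_ratio (z : ℝ) (hz : 0 < z) : 1/(z+1) ≤ Real.log ((z+1)/z) := by
  have h0 : (0:ℝ) < z + 1 := by linarith
  have h1 : (0:ℝ) < z/(z+1) := by positivity
  have h2 := Real.log_le_sub_one_of_pos h1
  rw [Real.log_div (by linarith) (by linarith)] at h2
  rw [Real.log_div (by linarith) (by linarith)]
  have h3 : z/(z+1) - 1 = -(1/(z+1)) := by field_simp; ring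
  linarith

lemma abs_log_sub (u : ℝ) (hu : |u| ≤ 1/2) : |Real.log (1+u) - u| ≤ 2*u^2 := by
  obtain ⟨hl, hr⟩ := abs_le.mp hu
  have h1 : (0:ℝ) < 1 + u := by linarith
  have hup : Real.log (1+u) ≤ u := by
    have := Real.log_le_sub_one_of_pos h1; linarith
  have hlow : u/(1+u) ≤ Real.log (1+u) := by
    have h2 : (0:ℝ) < 1/(1+u) := by positivity
    have h3 := Real.log_le_sub_one_of_pos h2
    rw [one_div, Real.log_inv] at h3
    have h4 : 1/(1+u) - 1 = -(u/(1+u)) := by field_simp; ring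
    rw [one_div] at h4
    linarith
  have h5 : u - u/(1+u) = u^2/(1+u) := by field_simp; ring
  have h6 : u^2/(1+u) ≤ 2*u^2 := by
    rw [div_le_iff₀ h1]; nlinarith [sq_nonneg u]
  rw [abs_le]; constructor <;> nlinarith

lemma log_telescope (c : ℝ) (hc : 0 < c) :
    ∀ m : ℕ, ∑ j ∈ Finset.range m, Real.log ((c + j + 1) / (c + j)) = Real.log ((c + m) / c)
  | 0 => by simp [div_self hc.ne']
  | (m+1) => by
    rw [Finset.sum_range_succ, log_telescope c hc m]
    have h1 : (0:ℝ) < c + m := by positivity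
    rw [← Real.log_mul (by positivity) (by positivity)]
    congr 1
    push_cast
    field_simp
    ring

lemma ratio_tendsto (lam c d x : ℝ) (hlam : 0 < lam) (h : ℕ → ℕ)
    (hx : Tendsto (fun n => (h n : ℝ)/n) atTop (𝓝 x)) :
    Tendsto (fun n : ℕ => (lam*n + c + h n)/(lam*n + d)) atTop (𝓝 ((lam + x)/lam)) := by
  have key : Tendsto (fun n : ℕ => (lam + (c/n + (h n : ℝ)/n))/(lam + d/n)) atTop
      (𝓝 ((lam + x)/lam)) := by
    have h1 : Tendsto (fun n : ℕ => (1:ℝ)/n) atTop (𝓝 0) := by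
      simpa using tendsto_one_div_atTop_nhds_zero_nat (𝕜 := ℝ)
    have hc' : Tendsto (fun n : ℕ => c/n) atTop (𝓝 0) := by
      have := h1.const_mul c; simpa [mul_comm, div_eq_mul_inv, one_div] using this
    have hd' : Tendsto (fun n : ℕ => d/n) atTop (𝓝 0) := by
      have := h1.const_mul d; simpa [mul_comm, div_eq_mul_inv, one_div] using this
    have hnum : Tendsto (fun n : ℕ => lam + (c/n + (h n:ℝ)/n)) atTop (𝓝 (lam + (0 + x))) :=
      tendsto_const_nhds.add (hc'.add hx)
    have hden : Tendsto (fun n : ℕ => lam + d/n) atTop (𝓝 (lam + 0)) :=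
      tendsto_const_nhds.add hd'
    have := hnum.div hden (by simpa using hlam.ne')
    simp only [add_zero, zero_add] at this
    exact this
  apply key.congr'
  filter_upwards [eventually_gt_atTop 0] with n hn
  have hn' : (n:ℝ) ≠ 0 := Nat.cast_ne_zero.mpr hn.ne'
  field_simp
  ring

lemma sum_tendsto (lam x : ℝ) (hlam : 0 < lam) (h : ℕ → ℕ)
    (hx : Tendsto (fun n => (h n : ℝ)/n) atTop (𝓝 x)) :
    Tendsto (fun n : ℕ => ∑ j ∈ Finset.range (h n), 1/(lam*n + 1 + j)) atTop
      (𝓝 (Real.log ((lam+x)/lam))) := by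
  have hx0 : 0 ≤ x := ge_of_tendsto' hx (fun n => by positivity)
  have hlx : (0:ℝ) < (lam + x)/lam := by positivity
  have hL : Tendsto (fun n : ℕ => Real.log ((lam*n + 1 + h n)/(lam*n + 1))) atTop
      (𝓝 (Real.log ((lam+x)/lam))) :=
    (ratio_tendsto lam 1 1 x hlam h hx).log hlx.ne'
  have hU : Tendsto (fun n : ℕ => Real.log ((lam*n + 0 + h n)/(lam*n + 0))) atTop
      (𝓝 (Real.log ((lam+x)/lam))) :=
    (ratio_tendsto lam 0 0 x hlam h hx).log hlx.ne'
  apply tendsto_of_tendsto_of_tendsto_of_le_of_le' hL hU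
  · filter_upwards [eventually_gt_atTop 0] with n hn
    have hc : (0:ℝ) < lam*n + 1 := by positivity
    calc Real.log ((lam*n + 1 + h n)/(lam*n + 1))
        = ∑ j ∈ Finset.range (h n), Real.log (((lam*n+1) + j + 1)/((lam*n+1) + j)) := by
          rw [log_telescope _ hc]
      _ ≤ ∑ j ∈ Finset.range (h n), 1/(lam*n + 1 + j) := by
          apply Finset.sum_le_sum
          intro j _
          have hz : (0:ℝ) < lam*n + 1 + j := by positivity
          have := log_ratio_le (lam*n + 1 + (j:ℝ)) hz
          exact this
  · filter_upwards [eventually_gt_atTop 0] with n hn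
    have hn0 : (0:ℝ) < (n:ℝ) := by exact_mod_cast hn
    have hc : (0:ℝ) < lam*n := by positivity
    calc ∑ j ∈ Finset.range (h n), 1/(lam*n + 1 + j)
        ≤ ∑ j ∈ Finset.range (h n), Real.log ((lam*n + j + 1)/(lam*n + j)) := by
          apply Finset.sum_le_sum
          intro j _
          have hz : (0:ℝ) < lam*n + j := by positivity
          have h2 := le_log_ratio (lam*n + (j:ℝ)) hz
          calc 1/(lam*n + 1 + (j:ℝ)) = 1/(lam*n + j + 1) := by ring_nf
            _ ≤ Real.log ((lam*n + j + 1)/(lam*n + j)) := h2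
      _ = Real.log ((lam*n + 0 + h n)/(lam*n + 0)) := by
          rw [log_telescope _ hc]; ring_nf

lemma prod_tendsto (lam x t : ℝ) (hlam : 0 < lam) (ht : |t| ≤ 1) (h : ℕ → ℕ)
    (hh : ∀ n, h n ≤ n)
    (hx : Tendsto (fun n => (h n : ℝ)/n) atTop (𝓝 x)) :
    Tendsto (fun n : ℕ => ∏ j ∈ Finset.range (h n), (1 + t/(lam*n + 1 + j))) atTop
      (𝓝 (((lam+x)/lam) ^ t)) := by
  have hx0 : 0 ≤ x := ge_of_tendsto' hx (fun n => by positivity)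
  have hlx : (0:ℝ) < (lam + x)/lam := by positivity
  -- the sum of logs converges
  have hS : Tendsto (fun n : ℕ => ∑ j ∈ Finset.range (h n), Real.log (1 + t/(lam*n + 1 + j)))
      atTop (𝓝 (t * Real.log ((lam+x)/lam))) := by
    have h1 : Tendsto (fun n : ℕ => t * ∑ j ∈ Finset.range (h n), 1/(lam*n + 1 + j)) atTop
        (𝓝 (t * Real.log ((lam+x)/lam))) := (sum_tendsto lam x hlam h hx).const_mul t
    have h2 : Tendsto (fun n : ℕ =>
        (∑ j ∈ Finset.range (h n), Real.log (1 + t/(lam*n + 1 + j)))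
          - t * ∑ j ∈ Finset.range (h n), 1/(lam*n + 1 + j)) atTop (𝓝 0) := by
      apply squeeze_zero_norm' (a := fun n : ℕ => 2*t^2/(lam^2*n))
      · filter_upwards [eventually_ge_atTop (Nat.ceil (1/lam))] with n hn
        have hn1 : 1 ≤ lam * n := by
          have : (1:ℝ)/lam ≤ n := le_trans (Nat.le_ceil _) (by exact_mod_cast hn)
          rw [div_le_iff₀ hlam] at this; linarith [this]
        have hn0 : (0:ℝ) < n := by nlinarith
        rw [Finset.mul_sum, ← Finset.sum_sub_distrib]
        calc ‖∑ j ∈ Finset.range (h n),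
              (Real.log (1 + t/(lam*n + 1 + j)) - t * (1/(lam*n + 1 + j)))‖
            ≤ ∑ j ∈ Finset.range (h n),
              ‖Real.log (1 + t/(lam*n + 1 + j)) - t * (1/(lam*n + 1 + j))‖ :=
              norm_sum_le _ _
          _ ≤ ∑ j ∈ Finset.range (h n), 2*t^2/(lam^2*n^2) := by
              apply Finset.sum_le_sum
              intro j _
              have hz : (0:ℝ) < lam*n + 1 + j := by positivity
              have hu : |t/(lam*n + 1 + j)| ≤ 1/2 := by
                rw [abs_div, abs_of_pos hz, div_le_iff₀ hz]
                have : |t| ≤ 1 := ht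
                have h3 : (1:ℝ)/2 * (lam*n + 1 + j) ≥ 1 := by
                  have : (0:ℝ) ≤ j := Nat.cast_nonneg j
                  nlinarith
                linarith
              have := abs_log_sub (t/(lam*n + 1 + j)) hu
              have heq : t * (1/(lam*n + 1 + j)) = t/(lam*n + 1 + j) := by ring
              rw [Real.norm_eq_abs, heq]
              calc |Real.log (1 + t / (lam * ↑n + 1 + ↑j)) - t / (lam * ↑n + 1 + ↑j)|
                  ≤ 2*(t/(lam*n + 1 + j))^2 := this
                _ = 2*t^2/(lam*n + 1 + j)^2 := by rw [div_pow]; ring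
                _ ≤ 2*t^2/(lam^2*n^2) := by
                    have hZ : lam^2*n^2 ≤ (lam*n + 1 + j)^2 := by
                      nlinarith [Nat.cast_nonneg (α := ℝ) j]
                    gcongr
          _ ≤ 2*t^2/(lam^2*n) := by
              rw [Finset.sum_const, Finset.card_range, nsmul_eq_mul]
              have hhn : (h n : ℝ) ≤ n := by exact_mod_cast hh n
              calc (h n:ℝ) * (2*t^2/(lam^2*n^2))
                  ≤ (n:ℝ) * (2*t^2/(lam^2*n^2)) :=
                    mul_le_mul_of_nonneg_right hhn (by positivity)
                _ = 2*t^2/(lam^2*n) := by field_simp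
      · have : Tendsto (fun n : ℕ => (1:ℝ)/n) atTop (𝓝 0) := by
          simpa using tendsto_one_div_atTop_nhds_zero_nat (𝕜 := ℝ)
        have h4 := this.const_mul (2*t^2/lam^2)
        simp only [mul_zero] at h4
        apply h4.congr
        intro n
        field_simp
    have := h1.add h2
    simp only [add_zero] at this
    apply this.congr
    intro n
    ring
  -- positivity of factors, eventually
  have hpos : ∀ᶠ n : ℕ in atTop, ∀ j ∈ Finset.range (h n), (0:ℝ) < 1 + t/(lam*n + 1 + j) := by
    filter_upwards [eventually_ge_atTop (Nat.ceil (1/lam))] with n hn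
    intro j _
    have hn1 : 1 ≤ lam * n := by
      have : (1:ℝ)/lam ≤ n := le_trans (Nat.le_ceil _) (by exact_mod_cast hn)
      rw [div_le_iff₀ hlam] at this; linarith [this]
    have hz : (0:ℝ) < lam*n + 1 + j := by positivity
    have : |t/(lam*n + 1 + j)| < 1 := by
      rw [abs_div, abs_of_pos hz, div_lt_iff₀ hz]
      have : (0:ℝ) ≤ j := Nat.cast_nonneg j
      nlinarith
    have := (abs_lt.mp this).1
    linarith
  have hexp : Tendsto (fun n : ℕ =>
      Real.exp (∑ j ∈ Finset.range (h n), Real.log (1 + t/(lam*n + 1 + j)))) atTop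
      (𝓝 (Real.exp (t * Real.log ((lam+x)/lam)))) := (Real.continuous_exp.tendsto _).comp hS
  have hrw : Real.exp (t * Real.log ((lam+x)/lam)) = ((lam+x)/lam) ^ t := by
    rw [Real.rpow_def_of_pos hlx]; ring_nf
  rw [← hrw]
  apply hexp.congr'
  filter_upwards [hpos] with n hp
  rw [Real.exp_sum]
  apply Finset.prod_congr rfl
  intro j hj
  exact Real.exp_log (hp j hj)



lemma crit (f : ℕ → ℝ → ℝ) (g : ℝ → ℝ)
    (hlip : ∀ᶠ n : ℕ in atTop, ∀ x ∈ Icc (0:ℝ) 1, ∀ y ∈ Icc (0:ℝ) 1,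
      |f n x - f n y| ≤ |x - y| + 1/n)
    (hpt : ∀ x ∈ Icc (0:ℝ) 1, Tendsto (fun n => f n x) atTop (𝓝 (g x))) :
    TendstoUniformlyOn f g atTop (Icc 0 1) := by
  have hg : ∀ x ∈ Icc (0:ℝ) 1, ∀ y ∈ Icc (0:ℝ) 1, |g x - g y| ≤ |x - y| := by
    intro x hx y hy
    have h1 : Tendsto (fun n => |f n x - f n y|) atTop (𝓝 |g x - g y|) :=
      ((hpt x hx).sub (hpt y hy)).abs
    have h2 : Tendsto (fun n : ℕ => |x - y| + 1/n) atTop (𝓝 (|x - y| + 0)) :=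
      tendsto_const_nhds.add (by simpa using tendsto_one_div_atTop_nhds_zero_nat (𝕜 := ℝ))
    rw [add_zero] at h2
    exact le_of_tendsto_of_tendsto h1 h2 (hlip.mono fun n hn => hn x hx y hy)
  rw [Metric.tendstoUniformlyOn_iff]
  intro ε hε
  obtain ⟨m0, hm0⟩ := exists_nat_one_div_lt (show (0:ℝ) < ε/5 by linarith)
  set m : ℕ := m0 + 1 with hm
  have hmpos : (0:ℝ) < m := by positivity
  have hm5 : 1/(m:ℝ) < ε/5 := by exact_mod_cast hm0
  have hptm : ∀ i ∈ Finset.range (m+1), ∀ᶠ n : ℕ in atTop,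
      |f n ((i:ℝ)/m) - g ((i:ℝ)/m)| < ε/5 := by
    intro i hi
    have hmem : (i:ℝ)/m ∈ Icc (0:ℝ) 1 := by
      constructor
      · positivity
      · rw [div_le_one hmpos]
        exact_mod_cast Nat.lt_succ_iff.mp (Finset.mem_range.mp hi)
    have h7 : Tendsto (fun n => |f n ((i:ℝ)/m) - g ((i:ℝ)/m)|) atTop (𝓝 0) := by
      have := ((hpt _ hmem).sub (tendsto_const_nhds (x := g ((i:ℝ)/m)))).abs
      simpa using this
    exact h7.eventually_lt_const (by linarith)
  have h1n : ∀ᶠ n : ℕ in atTop, 1/(n:ℝ) < ε/5 := by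
    have : Tendsto (fun n : ℕ => 1/(n:ℝ)) atTop (𝓝 0) := by
      simpa using tendsto_one_div_atTop_nhds_zero_nat (𝕜 := ℝ)
    exact this.eventually_lt_const (by linarith)
  filter_upwards [hlip, h1n, (Finset.eventually_all (Finset.range (m+1))).mpr hptm]
    with n hLip h1 hGrid
  intro x hx
  set i : ℕ := ⌊x * m⌋₊ with hi
  have hx0 : 0 ≤ x := hx.1
  have hxm : x * m ≤ m := by
    have := hx.2; nlinarith
  have him : i ≤ m := by simpa using Nat.floor_le_of_le hxm
  set p : ℝ := (i:ℝ)/m with hp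
  have hpmem : p ∈ Icc (0:ℝ) 1 := by
    constructor
    · positivity
    · rw [div_le_one hmpos]; exact_mod_cast him
  have hxp : |x - p| ≤ 1/m := by
    have hfl : (i:ℝ) ≤ x * m := Nat.floor_le (by positivity)
    have hfl2 : x * m < i + 1 := Nat.lt_floor_add_one _
    have e1 : (i:ℝ)/m ≤ x := by rw [div_le_iff₀ hmpos]; linarith
    have e2 : x ≤ ((i:ℝ) + 1)/m := by rw [le_div_iff₀ hmpos]; linarith
    have e2' : ((i:ℝ)+1)/m = (i:ℝ)/m + 1/m := by ring
    rw [abs_le]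
    constructor <;> [skip; skip] <;> rw [hp] <;> linarith
  have hGi := hGrid i (Finset.mem_range.mpr (Nat.lt_succ_of_le him))
  have hLxp := hLip x hx p hpmem
  have hgxp := hg x hx p hpmem
  rw [Real.dist_eq]
  have : |g x - f n x| ≤ |g x - g p| + |f n p - g p| + |f n x - f n p| := by
    rw [show g x - f n x = (g x - g p) + -(f n p - g p) + -(f n x - f n p) by ring]
    calc |(g x - g p) + -(f n p - g p) + -(f n x - f n p)|
        ≤ |(g x - g p) + -(f n p - g p)| + |-(f n x - f n p)| := abs_add_le _ _
      _ ≤ |g x - g p| + |-(f n p - g p)| + |-(f n x - f n p)| := by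
          gcongr; exact abs_add_le _ _
      _ = |g x - g p| + |f n p - g p| + |f n x - f n p| := by rw [abs_neg, abs_neg]
  have h5 : |g x - g p| ≤ 1/m := hgxp.trans hxp
  have h6 : |f n x - f n p| ≤ 1/m + 1/n := le_trans hLxp (by gcongr)
  calc |g x - f n x| ≤ |g x - g p| + |f n p - g p| + |f n x - f n p| := this
    _ < 1/m + ε/5 + (1/m + 1/n) := by linarith
    _ < ε := by linarith



def numP (a lam : ℝ) (n m : ℕ) : ℝ := ∏ j ∈ Finset.range m, (lam*n + a + j)
def denP (lam : ℝ) (n m : ℕ) : ℝ := ∏ j ∈ Finset.range m, (lam*n + 1 + j)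
def cprod (a : ℝ) (r : ℕ) : ℝ := ∏ i ∈ Finset.range (r-1), (1 - a + i)

def Edet (a lam : ℝ) (n r h : ℕ) : ℝ :=
  if h = 0 then 0
  else if r = 0 then
    (if a = 0 then 1 + ∑ j ∈ Finset.range (h-1), lam*n/(lam*n + 1 + j)
     else (numP a lam n h / denP lam n (h-1) - lam*n)/a)
  else (h.choose r : ℝ) * cprod a r * numP a lam n (h-r) / denP lam n (h-1)

variable {a lam : ℝ} {n : ℕ}

lemma denP_pos (hlam : 0 < lam) (m : ℕ) : 0 < denP lam n m := by
  apply Finset.prod_pos; intro j _; positivity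

lemma denP_succ (m : ℕ) : denP lam n (m+1) = denP lam n m * (lam*n + 1 + m) :=
  Finset.prod_range_succ _ _

lemma numP_succ (m : ℕ) : numP a lam n (m+1) = numP a lam n m * (lam*n + a + m) :=
  Finset.prod_range_succ _ _

lemma cprod_succ (s : ℕ) : cprod a (s+2) = cprod a (s+1) * (1 - a + s) := by
  unfold cprod
  simp only [Nat.add_sub_cancel]
  exact Finset.prod_range_succ _ _

lemma numP_zero_a (hlam : 0 < lam) (m : ℕ) :
    numP 0 lam n (m+1) = lam*n * denP lam n m := by
  unfold numP denP
  rw [Finset.prod_range_succ']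
  rw [Finset.prod_congr rfl (show ∀ j ∈ Finset.range m,
    (lam*↑n + 0 + ↑(j+1)) = (lam*↑n + 1 + ↑j) from fun j _ => by push_cast; ring)]
  push_cast
  ring

lemma Edet0_eq (ha : a ≠ 0) (h : ℕ) (hh : h ≠ 0) :
    Edet a lam n 0 h = (numP a lam n h / denP lam n (h-1) - lam*n)/a := by
  simp [Edet, hh, ha]

lemma Edet0_eq' (h : ℕ) (hh : h ≠ 0) :
    Edet 0 lam n 0 h = 1 + ∑ j ∈ Finset.range (h-1), lam*n/(lam*n + 1 + j) := by
  simp [Edet, hh]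

lemma Edetr_eq (r h : ℕ) (hr : r ≠ 0) (hh : h ≠ 0) :
    Edet a lam n r h
      = (h.choose r : ℝ) * cprod a r * numP a lam n (h-r) / denP lam n (h-1) := by
  simp [Edet, hh, hr]

lemma aE0 (hlam : 0 < lam) (m : ℕ) :
    a * Edet a lam n 0 (m+1) + lam*n = numP a lam n (m+1) / denP lam n m := by
  have hd := (denP_pos (n := n) hlam m).ne'
  by_cases ha : a = 0
  · subst ha
    rw [numP_zero_a hlam]
    field_simp
    simp
  · rw [Edet0_eq ha _ (Nat.succ_ne_zero m)]
    simp only [Nat.succ_sub_one]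
    field_simp
    ring

lemma Edet_one_zero (hlam : 0 < lam) : Edet a lam n 0 1 = 1 := by
  by_cases ha : a = 0
  · subst ha; rw [Edet0_eq' 1 one_ne_zero]; simp
  · rw [Edet0_eq ha 1 one_ne_zero]
    unfold numP denP
    norm_num
    exact ha

lemma Edet_one_one : Edet a lam n 1 1 = 1 := by
  simp [Edet, cprod, numP, denP]

lemma Edet_one_big (r : ℕ) (hr : 2 ≤ r) : Edet a lam n r 1 = 0 := by
  unfold Edet
  rw [if_neg one_ne_zero, if_neg (by omega), Nat.choose_eq_zero_of_lt (by omega)]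
  simp

lemma Edet0_rec (hlam : 0 < lam) (m : ℕ) :
    Edet a lam n 0 (m+2) = Edet a lam n 0 (m+1)
      + (a * Edet a lam n 0 (m+1) + lam*n)/(lam*n + 1 + m) := by
  have hd := (denP_pos (n := n) hlam m).ne'
  have hD : (0:ℝ) < lam*n + 1 + m := by positivity
  rw [aE0 hlam]
  have h21 : m + 2 - 1 = m + 1 := by omega
  by_cases ha : a = 0
  · subst ha
    rw [Edet0_eq' _ (Nat.succ_ne_zero _), Edet0_eq' _ (Nat.succ_ne_zero _)]
    simp only [Nat.succ_sub_one, h21]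
    rw [Finset.sum_range_succ, numP_zero_a hlam]
    field_simp
    ring
  · rw [Edet0_eq ha _ (Nat.succ_ne_zero _), Edet0_eq ha _ (Nat.succ_ne_zero _)]
    simp only [Nat.succ_sub_one, h21, Nat.succ_eq_add_one]
    rw [numP_succ, denP_succ]
    push_cast
    field_simp
    ring

lemma Edet1_rec (hlam : 0 < lam) (m : ℕ) :
    Edet a lam n 1 (m+2) = Edet a lam n 1 (m+1)
      + (a * Edet a lam n 0 (m+1) + lam*n)/(lam*n + 1 + m)
      - (1 - a) * Edet a lam n 1 (m+1)/(lam*n + 1 + m) := by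
  have hd := (denP_pos (n := n) hlam m).ne'
  have hD : (0:ℝ) < lam*n + 1 + m := by positivity
  rw [aE0 hlam]
  rw [Edetr_eq 1 _ one_ne_zero (Nat.succ_ne_zero _), Edetr_eq 1 _ one_ne_zero (Nat.succ_ne_zero _)]
  simp only [Nat.succ_sub_one, Nat.succ_eq_add_one]
  rw [numP_succ, denP_succ]
  have hc1 : cprod a 1 = 1 := by simp [cprod]
  rw [hc1, Nat.choose_one_right, Nat.choose_one_right]
  push_cast
  field_simp
  ring

lemma Edetr_rec (hlam : 0 < lam) (m s : ℕ) :
    Edet a lam n (s+2) (m+2) = Edet a lam n (s+2) (m+1)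
      + (((s:ℝ)+1-a) * Edet a lam n (s+1) (m+1)
        - ((s:ℝ)+2-a) * Edet a lam n (s+2) (m+1))/(lam*n + 1 + m) := by
  have hd := (denP_pos (n := n) hlam m).ne'
  have hD : (0:ℝ) < lam*n + 1 + m := by positivity
  rw [Edetr_eq _ _ (Nat.succ_ne_zero _) (Nat.succ_ne_zero _),
    Edetr_eq _ _ (Nat.succ_ne_zero _) (Nat.succ_ne_zero _),
    Edetr_eq _ _ (Nat.succ_ne_zero _) (Nat.succ_ne_zero _)]
  simp only [Nat.succ_sub_one, Nat.succ_eq_add_one]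
  rcases lt_trichotomy s m with hsm | rfl | hms
  · -- s ≤ m - 1, write m = s + e + 1
    obtain ⟨e, rfl⟩ : ∃ e, m = s + e + 1 := ⟨m - s - 1, by omega⟩
    have e1 : s + e + 1 + 2 - (s + 2) = e + 1 := by omega
    have e2 : s + e + 1 + 1 - (s + 2) = e := by omega
    have e3 : s + e + 1 + 1 - (s + 1) = e + 1 := by omega
    have pascalN : (s+e+1+2).choose (s+2) = (s+e+1+1).choose (s+1) + (s+e+1+1).choose (s+2) := by
      rw [show s+e+1+2 = (s+e+1+1)+1 from by omega]
      exact Nat.choose_succ_succ _ _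
    rw [e1, e2, e3, cprod_succ, numP_succ, denP_succ, pascalN]
    push_cast
    field_simp
    ring
  · -- s = m
    have e1 : s + 2 - (s + 2) = 0 := by omega
    have e2 : s + 1 - (s + 2) = 0 := by omega
    have e3 : s + 1 - (s + 1) = 0 := by omega
    rw [e1, e2, e3, cprod_succ]
    rw [Nat.choose_self, Nat.choose_self, Nat.choose_eq_zero_of_lt (by omega)]
    rw [denP_succ]
    have : numP a lam n 0 = 1 := by simp [numP]
    rw [this]
    push_cast
    field_simp
    ring
  · -- s > m : everything vanishes
    rw [Nat.choose_eq_zero_of_lt (by omega), Nat.choose_eq_zero_of_lt (by omega),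
      Nat.choose_eq_zero_of_lt (by omega)]
    simp



-- mutual exclusivity (pointwise logic)
lemma new_growth_excl {Ω : Type*} {K : ℕ → ℕ → ℕ → Ω → ℤ} {n h s : ℕ} {ω : Ω}
    (hs : 1 ≤ s) (hnew : IsNewBlock K n h ω) (hg : IsGrowth K n s h ω) : False := by
  obtain ⟨e0, _, _⟩ := hnew
  obtain ⟨_, _, d3⟩ := hg
  have h0 := d3 0 (by omega) (by omega)
  omega

lemma growth_growth_excl {Ω : Type*} {K : ℕ → ℕ → ℕ → Ω → ℤ} {n h s t : ℕ} {ω : Ω}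
    (hst : s ≠ t) (hgs : IsGrowth K n s h ω) (hgt : IsGrowth K n t h ω) : False := by
  obtain ⟨ds1, ds2, ds3⟩ := hgs
  obtain ⟨dt1, dt2, dt3⟩ := hgt
  by_cases h1 : t = s + 1
  · subst h1; omega
  · by_cases h2 : s = t + 1
    · subst h2; omega
    · have := dt3 s hst h2
      omega

variable {a lam : ℝ} {Ω : Type*} [MeasurableSpace Ω] (A : CRPArray a lam Ω)

lemma K_meas (n r h : ℕ) : Measurable (A.K n r h) := by
  rcases Nat.eq_zero_or_pos h with rfl | hpos
  · have : A.K n r 0 = fun _ => 0 := funext (A.K_zero n r)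
    rw [this]; exact measurable_const
  · apply measurable_iff_comap_le.mpr
    refine le_trans ?_ (A.F_le n h)
    rw [A.F_eq]
    refine le_trans ?_ (le_iSup _ r)
    exact le_iSup₂ (f := fun k (_ : k ∈ Finset.Icc 1 h) =>
      MeasurableSpace.comap (A.K n r k) ⊤) h (Finset.mem_Icc.mpr ⟨hpos, le_rfl⟩)

lemma K_meas_real (n r h : ℕ) : Measurable (fun ω => (A.K n r h ω : ℝ)) :=
  measurable_from_top.comp (K_meas A n r h)

lemma K_bound (n : ℕ) (hn1 : 1 ≤ n) :
    ∀ h, h ≤ n → ∀ᵐ ω ∂A.P,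
      (∀ r, -(h:ℤ) ≤ A.K n r h ω ∧ A.K n r h ω ≤ h) ∧
      (∀ s, h < s → A.K n s h ω = 0) := by
  intro h
  induction h with
  | zero =>
    intro _
    filter_upwards with ω
    constructor
    · intro r; rw [A.K_zero n r ω]; omega
    · intro s _; exact A.K_zero n s ω
  | succ h IH =>
    intro hle
    rcases Nat.eq_zero_or_pos h with rfl | hpos
    · filter_upwards with ω
      constructor
      · intro r
        match r with
        | 0 => rw [A.K_init_blocks n ω]; omega
        | 1 => rw [A.K_init_one n ω]; omega
        | (r+2) => rw [A.K_init_big n (r+2) (by omega) ω]; omega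
      · intro s hs
        exact A.K_init_big n s (by omega) ω
    · have h2 : 2 ≤ h + 1 := by omega
      filter_upwards [IH (by omega), A.step n hn1 (h+1) h2 hle] with ω hIH hstep
      obtain ⟨hb, hv⟩ := hIH
      have hred : h + 1 - 1 = h := rfl
      rcases hstep with hnew | ⟨s, hs1, hs2, hg⟩
      · obtain ⟨e0, e1, e2⟩ := hnew
        rw [hred] at e0 e1 e2
        constructor
        · intro r
          match r with
          | 0 => have := hb 0; rw [e0]; push_cast; omega
          | 1 => have := hb 1; rw [e1]; push_cast; omega
          | (r+2) =>
            have := hb (r+2); rw [e2 (r+2) (by omega)]; push_cast; omega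
        · intro s hs
          rw [e2 s (by omega)]
          exact hv s (by omega)
      · obtain ⟨d1, d2, d3⟩ := hg
        rw [hred] at d1 d2 d3
        rw [hred] at hs2
        constructor
        · intro r
          by_cases h1 : r = s
          · subst h1; have := hb r; rw [d1]; push_cast; omega
          · by_cases h2' : r = s + 1
            · subst h2'; have := hb (s+1); rw [d2]; push_cast; omega
            · have := hb r; rw [d3 r h1 h2']; push_cast; omega
        · intro t ht
          rw [d3 t (by omega) (by omega)]
          exact hv t (by omega)

lemma K_integrable (n : ℕ) (hn1 : 1 ≤ n) (r h : ℕ) (hh : h ≤ n) :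
    Integrable (fun ω => (A.K n r h ω : ℝ)) A.P := by
  haveI : IsProbabilityMeasure A.P := A.isProb
  refine Integrable.mono' (integrable_const (h:ℝ)) ((K_meas_real A n r h).aestronglyMeasurable) ?_
  filter_upwards [K_bound A n hn1 h hh] with ω hω
  obtain ⟨hb, _⟩ := hω
  have := hb r
  rw [Real.norm_eq_abs, abs_le]
  constructor <;> [push_cast; push_cast] <;> [exact_mod_cast this.1; exact_mod_cast this.2]

lemma K_vanish_int (n : ℕ) (hn1 : 1 ≤ n) (s h : ℕ) (hh : h ≤ n) (hs : h < s) :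
    ∫ ω, (A.K n s h ω : ℝ) ∂A.P = 0 := by
  have : (fun ω => (A.K n s h ω : ℝ)) =ᵐ[A.P] 0 := by
    filter_upwards [K_bound A n hn1 h hh] with ω hω
    rw [hω.2 s hs]; simp
  rw [integral_congr_ae this]; simp

lemma mset_eqfun {f g : Ω → ℤ} (hf : Measurable f) (hg : Measurable g) :
    MeasurableSet {ω | f ω = g ω} := by
  have : {ω | f ω = g ω} = (fun ω => f ω - g ω) ⁻¹' {0} := by
    ext ω; simp [sub_eq_zero]
  rw [this]
  exact (hf.sub hg) (measurableSet_singleton 0)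

lemma measurableSet_new (n h : ℕ) : MeasurableSet {ω | IsNewBlock A.K n h ω} := by
  have : {ω | IsNewBlock A.K n h ω} =
      ({ω | A.K n 0 h ω = A.K n 0 (h-1) ω + 1} ∩ {ω | A.K n 1 h ω = A.K n 1 (h-1) ω + 1}) ∩
      ⋂ (r : ℕ), ⋂ (_ : 2 ≤ r), {ω | A.K n r h ω = A.K n r (h-1) ω} := by
    ext ω; simp [IsNewBlock, and_assoc]
  rw [this]
  refine MeasurableSet.inter (MeasurableSet.inter ?_ ?_) ?_
  · exact mset_eqfun (K_meas A n 0 h) ((K_meas A n 0 (h-1)).add_const 1)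
  · exact mset_eqfun (K_meas A n 1 h) ((K_meas A n 1 (h-1)).add_const 1)
  · exact MeasurableSet.iInter fun r => MeasurableSet.iInter fun _ =>
      mset_eqfun (K_meas A n r h) (K_meas A n r (h-1))

lemma measurableSet_growth (n s h : ℕ) : MeasurableSet {ω | IsGrowth A.K n s h ω} := by
  have : {ω | IsGrowth A.K n s h ω} =
      ({ω | A.K n s h ω = A.K n s (h-1) ω - 1}
        ∩ {ω | A.K n (s+1) h ω = A.K n (s+1) (h-1) ω + 1}) ∩
      ⋂ (r : ℕ), ⋂ (_ : r ≠ s), ⋂ (_ : r ≠ s + 1), {ω | A.K n r h ω = A.K n r (h-1) ω} := by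
    ext ω; simp [IsGrowth, and_assoc]
  rw [this]
  refine MeasurableSet.inter (MeasurableSet.inter ?_ ?_) ?_
  · exact mset_eqfun (K_meas A n s h) ((K_meas A n s (h-1)).add_const (-1))
  · exact mset_eqfun (K_meas A n (s+1) h) ((K_meas A n (s+1) (h-1)).add_const 1)
  · exact MeasurableSet.iInter fun r => MeasurableSet.iInter fun _ =>
      MeasurableSet.iInter fun _ => mset_eqfun (K_meas A n r h) (K_meas A n r (h-1))

lemma prob_new (n : ℕ) (hn1 : 1 ≤ n) (h : ℕ) (h2 : 2 ≤ h) (hn : h ≤ n) :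
    ∫ ω, Set.indicator {ω | IsNewBlock A.K n h ω} (fun _ => (1:ℝ)) ω ∂A.P
      = (a * (∫ ω, (A.K n 0 (h-1) ω : ℝ) ∂A.P) + lam * n) / (lam * n + (h:ℝ) - 1) := by
  haveI : IsProbabilityMeasure A.P := A.isProb
  have hm := A.F_le n (h-1)
  have step1 : ∫ ω, Set.indicator {ω | IsNewBlock A.K n h ω} (fun _ => (1:ℝ)) ω ∂A.P
      = ∫ ω, (a * (A.K n 0 (h-1) ω : ℝ) + lam * n) / (lam * n + (h:ℝ) - 1) ∂A.P :=
    (integral_condExp hm).symm.trans (integral_congr_ae (A.condNew n hn1 h h2 hn))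
  rw [step1]
  have hint := K_integrable A n hn1 0 (h-1) (by omega)
  have : (fun ω => (a * (A.K n 0 (h-1) ω : ℝ) + lam * n) / (lam * n + (h:ℝ) - 1))
      = fun ω => (a / (lam * n + (h:ℝ) - 1)) * (A.K n 0 (h-1) ω : ℝ)
        + (lam * n) / (lam * n + (h:ℝ) - 1) := by
    funext ω; ring
  rw [this, integral_add (hint.const_mul _) (integrable_const _), integral_const_mul,
    integral_const]
  simp [measure_univ]
  ring

lemma prob_growth (n : ℕ) (hn1 : 1 ≤ n) (h : ℕ) (h2 : 2 ≤ h) (hn : h ≤ n)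
    (s : ℕ) (hs1 : 1 ≤ s) :
    ∫ ω, Set.indicator {ω | IsGrowth A.K n s h ω} (fun _ => (1:ℝ)) ω ∂A.P
      = ((s:ℝ) - a) * (∫ ω, (A.K n s (h-1) ω : ℝ) ∂A.P) / (lam * n + (h:ℝ) - 1) := by
  haveI : IsProbabilityMeasure A.P := A.isProb
  have hm := A.F_le n (h-1)
  by_cases hs2 : s ≤ h - 1
  · have step1 : ∫ ω, Set.indicator {ω | IsGrowth A.K n s h ω} (fun _ => (1:ℝ)) ω ∂A.P
        = ∫ ω, ((s:ℝ) - a) * (A.K n s (h-1) ω : ℝ) / (lam * n + (h:ℝ) - 1) ∂A.P :=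
      (integral_condExp hm).symm.trans (integral_congr_ae (A.condGrowth n hn1 h h2 hn s hs1 hs2))
    rw [step1]
    have hint := K_integrable A n hn1 s (h-1) (by omega)
    have : (fun ω => ((s:ℝ) - a) * (A.K n s (h-1) ω : ℝ) / (lam * n + (h:ℝ) - 1))
        = fun ω => (((s:ℝ) - a) / (lam * n + (h:ℝ) - 1)) * (A.K n s (h-1) ω : ℝ) := by
      funext ω; ring
    rw [this, integral_const_mul]
    ring
  · -- s > h - 1 : both sides vanish
    push_neg at hs2
    have hL : ∫ ω, Set.indicator {ω | IsGrowth A.K n s h ω} (fun _ => (1:ℝ)) ω ∂A.P = 0 := by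
      have hae : Set.indicator {ω | IsGrowth A.K n s h ω} (fun _ => (1:ℝ)) =ᵐ[A.P] 0 := by
        filter_upwards [A.step n hn1 h h2 hn] with ω hstep
        have hnot : ¬ IsGrowth A.K n s h ω := by
          intro hcon
          rcases hstep with hnew | ⟨t, ht1, ht2, hgt⟩
          · exact new_growth_excl hs1 hnew hcon
          · exact growth_growth_excl (by omega) hgt hcon
        simp [Set.indicator_of_notMem, hnot]
      rw [integral_congr_ae hae]; simp
    rw [hL, K_vanish_int A n hn1 s (h-1) (by omega) (by omega)]
    simp


def II (n r h : ℕ) : ℝ := ∫ ω, (A.K n r h ω : ℝ) ∂A.P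

lemma ind_integrable {E : Set Ω} (hE : MeasurableSet E) :
    Integrable (Set.indicator E fun _ => (1:ℝ)) A.P := by
  haveI : IsProbabilityMeasure A.P := A.isProb
  exact (integrable_const 1).indicator hE

lemma I0_rec (n : ℕ) (hn1 : 1 ≤ n) (h : ℕ) (h2 : 2 ≤ h) (hn : h ≤ n) :
    II A n 0 h = II A n 0 (h-1) + (a * II A n 0 (h-1) + lam*n)/(lam*n + (h:ℝ) - 1) := by
  haveI : IsProbabilityMeasure A.P := A.isProb
  have hae : (fun ω => (A.K n 0 h ω : ℝ)) =ᵐ[A.P]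
      (fun ω => (A.K n 0 (h-1) ω : ℝ)
        + Set.indicator {ω | IsNewBlock A.K n h ω} (fun _ => (1:ℝ)) ω) := by
    filter_upwards [A.step n hn1 h h2 hn] with ω hstep
    rcases hstep with hnew | ⟨s, hs1, hs2, hg⟩
    · rw [Set.indicator_of_mem (show ω ∈ {ω | IsNewBlock A.K n h ω} from hnew)]
      rw [hnew.1]; push_cast; ring
    · rw [Set.indicator_of_notMem (show ω ∉ {ω | IsNewBlock A.K n h ω} from
        fun hcon => new_growth_excl hs1 hcon hg)]
      rw [hg.2.2 0 (by omega) (by omega)]; ring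
  unfold II
  have hint1 : Integrable (fun ω => (A.K n 0 (h-1) ω : ℝ)) A.P :=
    K_integrable A n hn1 0 (h-1) (by omega)
  have hint2 : Integrable
      (fun ω => Set.indicator {ω | IsNewBlock A.K n h ω} (fun _ => (1:ℝ)) ω) A.P :=
    ind_integrable A (measurableSet_new A n h)
  rw [integral_congr_ae hae, integral_add hint1 hint2, prob_new A n hn1 h h2 hn]

lemma I1_rec (n : ℕ) (hn1 : 1 ≤ n) (h : ℕ) (h2 : 2 ≤ h) (hn : h ≤ n) :
    II A n 1 h = II A n 1 (h-1) + (a * II A n 0 (h-1) + lam*n)/(lam*n + (h:ℝ) - 1)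
      - (1 - a) * II A n 1 (h-1)/(lam*n + (h:ℝ) - 1) := by
  haveI : IsProbabilityMeasure A.P := A.isProb
  have hae : (fun ω => (A.K n 1 h ω : ℝ)) =ᵐ[A.P]
      (fun ω => (A.K n 1 (h-1) ω : ℝ)
        + Set.indicator {ω | IsNewBlock A.K n h ω} (fun _ => (1:ℝ)) ω
        - Set.indicator {ω | IsGrowth A.K n 1 h ω} (fun _ => (1:ℝ)) ω) := by
    filter_upwards [A.step n hn1 h h2 hn] with ω hstep
    rcases hstep with hnew | ⟨s, hs1, hs2, hg⟩
    · rw [Set.indicator_of_mem (show ω ∈ {ω | IsNewBlock A.K n h ω} from hnew),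
        Set.indicator_of_notMem (show ω ∉ {ω | IsGrowth A.K n 1 h ω} from
          fun hcon => new_growth_excl (le_refl 1) hnew hcon)]
      rw [hnew.2.1]; push_cast; ring
    · rw [Set.indicator_of_notMem (show ω ∉ {ω | IsNewBlock A.K n h ω} from
        fun hcon => new_growth_excl hs1 hcon hg)]
      by_cases hs : s = 1
      · subst hs
        rw [Set.indicator_of_mem (show ω ∈ {ω | IsGrowth A.K n 1 h ω} from hg)]
        rw [hg.1]; push_cast; ring
      · rw [Set.indicator_of_notMem (show ω ∉ {ω | IsGrowth A.K n 1 h ω} from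
          fun hcon => growth_growth_excl hs hg hcon)]
        rw [hg.2.2 1 (fun hc => hs hc.symm) (by omega)]; ring
  unfold II
  have hintK : Integrable (fun ω => (A.K n 1 (h-1) ω : ℝ)) A.P :=
    K_integrable A n hn1 1 (h-1) (by omega)
  have hintN : Integrable
      (fun ω => Set.indicator {ω | IsNewBlock A.K n h ω} (fun _ => (1:ℝ)) ω) A.P :=
    ind_integrable A (measurableSet_new A n h)
  have hintG : Integrable
      (fun ω => Set.indicator {ω | IsGrowth A.K n 1 h ω} (fun _ => (1:ℝ)) ω) A.P :=
    ind_integrable A (measurableSet_growth A n 1 h)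
  have hint1 : Integrable (fun ω => (A.K n 1 (h-1) ω : ℝ)
      + Set.indicator {ω | IsNewBlock A.K n h ω} (fun _ => (1:ℝ)) ω) A.P := hintK.add hintN
  rw [integral_congr_ae hae, integral_sub hint1 hintG, integral_add hintK hintN,
    prob_new A n hn1 h h2 hn, prob_growth A n hn1 h h2 hn 1 le_rfl]
  push_cast
  ring

lemma Ir_rec (n : ℕ) (hn1 : 1 ≤ n) (h : ℕ) (h2 : 2 ≤ h) (hn : h ≤ n) (r : ℕ) (hr : 2 ≤ r) :
    II A n r h = II A n r (h-1)
      + (((r:ℝ) - 1 - a) * II A n (r-1) (h-1) - ((r:ℝ) - a) * II A n r (h-1))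
        /(lam*n + (h:ℝ) - 1) := by
  haveI : IsProbabilityMeasure A.P := A.isProb
  have hr1 : r - 1 + 1 = r := by omega
  have hae : (fun ω => (A.K n r h ω : ℝ)) =ᵐ[A.P]
      (fun ω => (A.K n r (h-1) ω : ℝ)
        + Set.indicator {ω | IsGrowth A.K n (r-1) h ω} (fun _ => (1:ℝ)) ω
        - Set.indicator {ω | IsGrowth A.K n r h ω} (fun _ => (1:ℝ)) ω) := by
    filter_upwards [A.step n hn1 h h2 hn] with ω hstep
    rcases hstep with hnew | ⟨s, hs1, hs2, hg⟩
    · rw [Set.indicator_of_notMem (show ω ∉ {ω | IsGrowth A.K n (r-1) h ω} from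
        fun hcon => new_growth_excl (by omega) hnew hcon),
        Set.indicator_of_notMem (show ω ∉ {ω | IsGrowth A.K n r h ω} from
          fun hcon => new_growth_excl (by omega) hnew hcon)]
      rw [hnew.2.2 r hr]; ring
    · by_cases hsr : s = r - 1
      · subst hsr
        have hmem : ω ∈ {ω | IsGrowth A.K n (r-1) h ω} := hg
        rw [Set.indicator_of_mem hmem,
          Set.indicator_of_notMem (show ω ∉ {ω | IsGrowth A.K n r h ω} from
            fun hcon => growth_growth_excl (show r - 1 ≠ r by omega) hg hcon)]
        obtain ⟨d1, d2, d3⟩ := hg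
        rw [hr1] at d2
        rw [d2]; push_cast; ring
      · by_cases hsr2 : s = r
        · subst hsr2
          have hmem : ω ∈ {ω | IsGrowth A.K n s h ω} := hg
          rw [Set.indicator_of_mem hmem,
            Set.indicator_of_notMem (show ω ∉ {ω | IsGrowth A.K n (s-1) h ω} from
              fun hcon => growth_growth_excl (show s ≠ s - 1 by omega) hg hcon)]
          rw [hg.1]; push_cast; ring
        · rw [Set.indicator_of_notMem (show ω ∉ {ω | IsGrowth A.K n (r-1) h ω} from
              fun hcon => growth_growth_excl (show s ≠ r - 1 from hsr) hg hcon),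
            Set.indicator_of_notMem (show ω ∉ {ω | IsGrowth A.K n r h ω} from
              fun hcon => growth_growth_excl (show s ≠ r from hsr2) hg hcon)]
          rw [hg.2.2 r (fun hc => hsr2 hc.symm) (by omega)]; ring
  unfold II
  have hintK : Integrable (fun ω => (A.K n r (h-1) ω : ℝ)) A.P :=
    K_integrable A n hn1 r (h-1) (by omega)
  have hintG1 : Integrable
      (fun ω => Set.indicator {ω | IsGrowth A.K n (r-1) h ω} (fun _ => (1:ℝ)) ω) A.P :=
    ind_integrable A (measurableSet_growth A n (r-1) h)
  have hintG2 : Integrable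
      (fun ω => Set.indicator {ω | IsGrowth A.K n r h ω} (fun _ => (1:ℝ)) ω) A.P :=
    ind_integrable A (measurableSet_growth A n r h)
  have hint1 : Integrable (fun ω => (A.K n r (h-1) ω : ℝ)
      + Set.indicator {ω | IsGrowth A.K n (r-1) h ω} (fun _ => (1:ℝ)) ω) A.P :=
    hintK.add hintG1
  rw [integral_congr_ae hae, integral_sub hint1 hintG2, integral_add hintK hintG1,
    prob_growth A n hn1 h h2 hn (r-1) (by omega),
    prob_growth A n hn1 h h2 hn r (by omega)]
  rw [Nat.cast_sub (show 1 ≤ r by omega)]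
  push_cast
  ring

lemma II_one (hlam : 0 < lam) (n r : ℕ) :
    II A n r 1 = if r = 0 then 1 else if r = 1 then 1 else 0 := by
  haveI : IsProbabilityMeasure A.P := A.isProb
  unfold II
  match r with
  | 0 =>
    have : (fun ω => (A.K n 0 1 ω : ℝ)) = fun _ => (1:ℝ) :=
      funext fun ω => by rw [A.K_init_blocks n ω]; norm_num
    rw [this, integral_const]; simp
  | 1 =>
    have : (fun ω => (A.K n 1 1 ω : ℝ)) = fun _ => (1:ℝ) :=
      funext fun ω => by rw [A.K_init_one n ω]; norm_num
    rw [this, integral_const]; simp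
  | (r+2) =>
    have : (fun ω => (A.K n (r+2) 1 ω : ℝ)) = fun _ => (0:ℝ) :=
      funext fun ω => by rw [A.K_init_big n (r+2) (by omega) ω]; norm_num
    rw [this, integral_const]; simp

lemma I_eq_Edet (hlam : 0 < lam) (n : ℕ) (hn1 : 1 ≤ n) :
    ∀ h, 1 ≤ h → h ≤ n → ∀ r, II A n r h = Edet a lam n r h := by
  intro h
  induction h with
  | zero => omega
  | succ h IH =>
    intro _ hle r
    rcases Nat.eq_zero_or_pos h with rfl | hpos
    · rw [II_one A hlam n r]
      match r with
      | 0 => rw [Edet_one_zero hlam]; norm_num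
      | 1 => rw [Edet_one_one]; norm_num
      | (r+2) =>
        rw [Edet_one_big (r+2) (by omega), if_neg (by omega), if_neg (by omega)]
    · obtain ⟨m, rfl⟩ : ∃ m, h = m + 1 := ⟨h - 1, by omega⟩
      have h2 : 2 ≤ m + 2 := by omega
      have hD : lam*(n:ℝ) + ((m+2 : ℕ):ℝ) - 1 = lam*n + 1 + (m:ℝ) := by push_cast; ring
      have hred : m + 2 - 1 = m + 1 := rfl
      have e12 : m + 1 + 1 = m + 2 := rfl
      rw [e12] at hle ⊢
      match r with
      | 0 =>
        rw [I0_rec A n hn1 (m+2) h2 hle, hred, IH (by omega) (by omega) 0, hD,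
          Edet0_rec hlam m]
      | 1 =>
        rw [I1_rec A n hn1 (m+2) h2 hle, hred, IH (by omega) (by omega) 0,
          IH (by omega) (by omega) 1, hD, Edet1_rec hlam m]
      | (s+2) =>
        have hs21 : s + 2 - 1 = s + 1 := rfl
        rw [Ir_rec A n hn1 (m+2) h2 hle (s+2) (by omega), hred, hs21,
          IH (by omega) (by omega) (s+2), IH (by omega) (by omega) (s+1), hD,
          Edetr_rec hlam m s]
        push_cast
        ring

lemma II_zero (n r : ℕ) : II A n r 0 = 0 := by
  unfold II
  have : (fun ω => (A.K n r 0 ω : ℝ)) = fun _ => (0:ℝ) :=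
    funext fun ω => by rw [A.K_zero n r ω]; norm_num
  rw [this, integral_const]; simp

lemma II_diff_one (n : ℕ) (hn1 : 1 ≤ n) (r h : ℕ) (hh1 : 1 ≤ h) (hle : h ≤ n) :
    |II A n r h - II A n r (h-1)| ≤ 1 := by
  haveI : IsProbabilityMeasure A.P := A.isProb
  have hf : Integrable (fun ω => (A.K n r h ω : ℝ) - (A.K n r (h-1) ω : ℝ)) A.P :=
    (K_integrable A n hn1 r h hle).sub (K_integrable A n hn1 r (h-1) (by omega))
  have hae : ∀ᵐ ω ∂A.P, |(A.K n r h ω : ℝ) - (A.K n r (h-1) ω : ℝ)| ≤ 1 := by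
    rcases Nat.eq_or_lt_of_le hh1 with h1 | h1
    · filter_upwards with ω
      rw [← h1]
      norm_num
      match r with
      | 0 => rw [A.K_init_blocks n ω, A.K_zero n 0 ω]; norm_num
      | 1 => rw [A.K_init_one n ω, A.K_zero n 1 ω]; norm_num
      | (r+2) => rw [A.K_init_big n (r+2) (by omega) ω, A.K_zero n (r+2) ω]; norm_num
    · filter_upwards [A.step n hn1 h (by omega) hle] with ω hstep
      rcases hstep with hnew | ⟨s, hs1, hs2, hg⟩
      · obtain ⟨e0, e1, e2⟩ := hnew
        match r with
        | 0 => rw [e0]; push_cast; norm_num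
        | 1 => rw [e1]; push_cast; norm_num
        | (r+2) => rw [e2 (r+2) (by omega)]; push_cast; norm_num
      · obtain ⟨d1, d2, d3⟩ := hg
        by_cases hrs : r = s
        · subst hrs; rw [d1]; push_cast; norm_num
        · by_cases hrs2 : r = s + 1
          · subst hrs2; rw [d2]; push_cast; norm_num
          · rw [d3 r hrs hrs2]; push_cast; norm_num
  have h1 : II A n r h - II A n r (h-1)
      = ∫ ω, ((A.K n r h ω : ℝ) - (A.K n r (h-1) ω : ℝ)) ∂A.P := by
    unfold II
    rw [integral_sub (K_integrable A n hn1 r h hle) (K_integrable A n hn1 r (h-1) (by omega))]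
  rw [h1]
  calc |∫ ω, ((A.K n r h ω : ℝ) - (A.K n r (h-1) ω : ℝ)) ∂A.P|
      = ‖∫ ω, ((A.K n r h ω : ℝ) - (A.K n r (h-1) ω : ℝ)) ∂A.P‖ := (Real.norm_eq_abs _).symm
    _ ≤ ∫ ω, ‖(A.K n r h ω : ℝ) - (A.K n r (h-1) ω : ℝ)‖ ∂A.P := norm_integral_le_integral_norm _
    _ = ∫ ω, |(A.K n r h ω : ℝ) - (A.K n r (h-1) ω : ℝ)| ∂A.P := by
        simp [Real.norm_eq_abs]
    _ ≤ ∫ _ω, (1:ℝ) ∂A.P := integral_mono_ae hf.abs (integrable_const 1) hae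
    _ = 1 := by rw [integral_const]; simp

lemma II_dist_aux (n : ℕ) (hn1 : 1 ≤ n) (r : ℕ) :
    ∀ d h, h + d ≤ n → |II A n r (h + d) - II A n r h| ≤ d := by
  intro d
  induction d with
  | zero => intro h _; simp
  | succ d IHd =>
    intro h hle
    have h1 : |II A n r (h + d + 1) - II A n r (h + d)| ≤ 1 := by
      have := II_diff_one A n hn1 r (h + d + 1) (by omega) (by omega)
      simpa using this
    have h2 := IHd h (by omega)
    calc |II A n r (h + (d+1)) - II A n r h|
        = |(II A n r (h + d + 1) - II A n r (h + d)) + (II A n r (h + d) - II A n r h)| := by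
          rw [show h + (d+1) = h + d + 1 from rfl]; ring_nf
      _ ≤ |II A n r (h + d + 1) - II A n r (h + d)| + |II A n r (h + d) - II A n r h| :=
          abs_add_le _ _
      _ ≤ 1 + d := by linarith
      _ = ((d+1 : ℕ) : ℝ) := by push_cast; ring

lemma II_dist (n : ℕ) (hn1 : 1 ≤ n) (r h h' : ℕ) (hh : h ≤ n) (hh' : h' ≤ n) :
    |II A n r h' - II A n r h| ≤ |(h' : ℝ) - (h : ℝ)| := by
  rcases le_total h h' with hle | hle
  · obtain ⟨d, rfl⟩ : ∃ d, h' = h + d := ⟨h' - h, by omega⟩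
    calc |II A n r (h + d) - II A n r h| ≤ d := II_dist_aux A n hn1 r d h hh'
      _ = |((h + d : ℕ) : ℝ) - (h : ℝ)| := by
          rw [abs_of_nonneg (by push_cast; linarith [Nat.cast_nonneg (α := ℝ) d])]
          push_cast; ring
  · obtain ⟨d, rfl⟩ : ∃ d, h = h' + d := ⟨h - h', by omega⟩
    rw [abs_sub_comm]
    calc |II A n r (h' + d) - II A n r h'| ≤ d := II_dist_aux A n hn1 r d h' hh
      _ = |((h' : ℝ)) - ((h' + d : ℕ) : ℝ)| := by
          rw [abs_sub_comm, abs_of_nonneg (by push_cast; linarith [Nat.cast_nonneg (α := ℝ) d])]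
          push_cast; ring

-- Part E : analytic limits
lemma const_div_tendsto (c : ℝ) : Tendsto (fun n : ℕ => c/(n:ℝ)) atTop (𝓝 0) := by
  have h1 : Tendsto (fun n : ℕ => (1:ℝ)/n) atTop (𝓝 0) := by
    simpa using tendsto_one_div_atTop_nhds_zero_nat (𝕜 := ℝ)
  have := h1.const_mul c
  simp only [mul_zero] at this
  apply this.congr
  intro n; ring

lemma floor_le_n (x : ℝ) (hx1 : x ≤ 1) (n : ℕ) : ⌊x * (n:ℝ)⌋₊ ≤ n := by
  rcases le_or_gt x 0 with hx | hx
  · have : x * n ≤ 0 := by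
      nlinarith [mul_nonneg (neg_nonneg.2 hx) (Nat.cast_nonneg (α := ℝ) n)]
    rw [Nat.floor_of_nonpos this]; omega
  · have hxn : x * n ≤ (n:ℝ) := by nlinarith [Nat.cast_nonneg (α := ℝ) n]
    simpa using Nat.floor_le_of_le hxn

lemma floor_div_tendsto (x : ℝ) (hx0 : 0 ≤ x) :
    Tendsto (fun n : ℕ => ((⌊x * (n:ℝ)⌋₊ : ℝ))/n) atTop (𝓝 x) := by
  have hlow : Tendsto (fun n : ℕ => x - 1/(n:ℝ)) atTop (𝓝 x) := by
    have h2 : Tendsto (fun n : ℕ => x - 1/(n:ℝ)) atTop (𝓝 (x - 0)) :=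
      tendsto_const_nhds.sub (const_div_tendsto 1)
    simpa using h2
  apply tendsto_of_tendsto_of_tendsto_of_le_of_le' hlow
    (tendsto_const_nhds (x := x) (f := atTop))
  · filter_upwards [eventually_gt_atTop 0] with n hn
    have hn0 : (0:ℝ) < n := by exact_mod_cast hn
    have h1 : x * n < (⌊x * (n:ℝ)⌋₊ : ℝ) + 1 := Nat.lt_floor_add_one _
    have hinv : (1:ℝ)/(n:ℝ)*(n:ℝ) = 1 := by field_simp
    rw [sub_le_iff_le_add, div_add' _ _ _ hn0.ne', le_div_iff₀ hn0]
    nlinarith [hinv]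
  · filter_upwards [eventually_gt_atTop 0] with n hn
    have hn0 : (0:ℝ) < n := by exact_mod_cast hn
    have h1 : (⌊x * (n:ℝ)⌋₊ : ℝ) ≤ x * n := Nat.floor_le (by positivity)
    rw [div_le_iff₀ hn0]
    linarith

lemma floor_event_ge (x : ℝ) (hx : 0 < x) (c : ℕ) :
    ∀ᶠ n : ℕ in atTop, c ≤ ⌊x * (n:ℝ)⌋₊ := by
  filter_upwards [eventually_ge_atTop (Nat.ceil ((c:ℝ)/x))] with n hn
  apply Nat.le_floor
  have h1 : ((c:ℝ)/x) ≤ n := le_trans (Nat.le_ceil _) (by exact_mod_cast hn)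
  rw [div_le_iff₀ hx] at h1
  nlinarith

lemma floor_sub_div_tendsto (x : ℝ) (hx : 0 < x) (c : ℕ) :
    Tendsto (fun n : ℕ => ((⌊x * (n:ℝ)⌋₊ - c : ℕ) : ℝ)/n) atTop (𝓝 x) := by
  have h0 : Tendsto (fun n : ℕ => ((⌊x * (n:ℝ)⌋₊ : ℝ) - c)/n) atTop (𝓝 x) := by
    have h1 : Tendsto (fun n : ℕ => ((⌊x * (n:ℝ)⌋₊:ℝ))/n - c/n) atTop (𝓝 (x - 0)) :=
      (floor_div_tendsto x hx.le).sub (const_div_tendsto c)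
    rw [sub_zero] at h1
    apply h1.congr
    intro n; ring
  apply h0.congr'
  filter_upwards [floor_event_ge x hx c] with n hn
  rw [Nat.cast_sub hn]

lemma Elim_zero_a0 (hlam : 0 < lam) (x : ℝ) (hx : 0 < x) (hx1 : x ≤ 1) :
    Tendsto (fun n : ℕ => Edet 0 lam n 0 ⌊x * (n:ℝ)⌋₊ / n) atTop
      (𝓝 (lam * Real.log ((lam + x)/lam))) := by
  have hsum := sum_tendsto lam x hlam (fun n => ⌊x * (n:ℝ)⌋₊ - 1)
    (floor_sub_div_tendsto x hx 1)
  have hmain : Tendsto (fun n : ℕ =>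
      1/(n:ℝ) + lam * ∑ j ∈ Finset.range (⌊x * (n:ℝ)⌋₊ - 1), 1/(lam*n + 1 + j)) atTop
      (𝓝 (0 + lam * Real.log ((lam + x)/lam))) :=
    (const_div_tendsto 1).add (hsum.const_mul lam)
  rw [zero_add] at hmain
  apply hmain.congr'
  filter_upwards [eventually_gt_atTop 0, floor_event_ge x hx 1] with n hn hfl
  have hn0 : (0:ℝ) < n := by exact_mod_cast hn
  rw [Edet0_eq' _ (by omega)]
  rw [add_div, Finset.mul_sum, Finset.sum_div]
  congr 1
  apply Finset.sum_congr rfl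
  intro j _
  have hz : (0:ℝ) < lam*n + 1 + j := by positivity
  field_simp

lemma numP_fact (hlam : 0 < lam) (m : ℕ) :
    numP a lam n (m+1)
      = (lam*n + a) * (denP lam n m * ∏ j ∈ Finset.range m, (1 + a/(lam*n + 1 + j))) := by
  unfold numP denP
  rw [Finset.prod_range_succ', ← Finset.prod_mul_distrib]
  rw [Finset.prod_congr rfl (show ∀ j ∈ Finset.range m,
      (lam*↑n + a + ↑(j+1)) = (lam*↑n + 1 + ↑j) * (1 + a/(lam*↑n + 1 + ↑j)) from by
    intro j _
    have hz : (0:ℝ) < lam*n + 1 + j := by positivity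
    push_cast
    field_simp
    ring)]
  push_cast
  ring

lemma Elim_zero_apos (ha : a ≠ 0) (ha1 : |a| ≤ 1) (hlam : 0 < lam) (x : ℝ) (hx : 0 < x)
    (hx1 : x ≤ 1) :
    Tendsto (fun n : ℕ => Edet a lam n 0 ⌊x * (n:ℝ)⌋₊ / n) atTop
      (𝓝 ((lam/a) * (((lam + x)/lam) ^ a - 1))) := by
  have hprod := prod_tendsto lam x a hlam ha1 (fun n => ⌊x * (n:ℝ)⌋₊ - 1)
    (fun n => by have := floor_le_n x hx1 n; show ⌊x * (n:ℝ)⌋₊ - 1 ≤ n; omega)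
    (floor_sub_div_tendsto x hx 1)
  set R : ℕ → ℝ := fun n => ∏ j ∈ Finset.range (⌊x * (n:ℝ)⌋₊ - 1), (1 + a/(lam*n + 1 + j))
    with hR
  have hmain : Tendsto (fun n : ℕ => (lam/a) * (R n - 1) + R n * (1/(n:ℝ))) atTop
      (𝓝 ((lam/a) * (((lam + x)/lam) ^ a - 1) + ((lam + x)/lam) ^ a * 0)) :=
    (((hprod.sub_const 1).const_mul (lam/a))).add (hprod.mul (const_div_tendsto 1))
  rw [mul_zero, add_zero] at hmain
  apply hmain.congr'
  filter_upwards [eventually_gt_atTop 0, floor_event_ge x hx 1] with n hn hfl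
  have hn0 : (0:ℝ) < n := by exact_mod_cast hn
  have hd := (denP_pos (n := n) hlam (⌊x * (n:ℝ)⌋₊ - 1)).ne'
  rw [Edet0_eq ha _ (by omega),
    show ⌊x * (n:ℝ)⌋₊ = (⌊x * (n:ℝ)⌋₊ - 1) + 1 from by omega,
    numP_fact hlam]
  simp only [Nat.add_sub_cancel]
  simp only [hR]
  field_simp
  ring

lemma numP_div_denP (hlam : 0 < lam) (m : ℕ) :
    numP a lam n m = denP lam n m * ∏ j ∈ Finset.range m, (1 + (a-1)/(lam*n + 1 + j)) := by
  unfold numP denP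
  rw [← Finset.prod_mul_distrib]
  apply Finset.prod_congr rfl
  intro j _
  have hz : (0:ℝ) < lam*n + 1 + j := by positivity
  field_simp
  ring

lemma denP_split (r h : ℕ) (hr : 1 ≤ r) (hh : r ≤ h) :
    denP lam n (h-1)
      = denP lam n (h-r) * ∏ i ∈ Finset.range (r-1), (lam*n + 1 + ((h-r+i : ℕ):ℝ)) := by
  unfold denP
  rw [show h - 1 = (h - r) + (r - 1) by omega, Finset.prod_range_add]

lemma Edet_factor (hlam : 0 < lam) (r h : ℕ) (hr : 1 ≤ r) (hh : r + 1 ≤ h) :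
    Edet a lam n r h = cprod a r * (∏ j ∈ Finset.range (h-r), (1 + (a-1)/(lam*n + 1 + j)))
      * ((h.choose r : ℝ) / ∏ i ∈ Finset.range (r-1), (lam*n + 1 + ((h-r+i : ℕ):ℝ))) := by
  rw [Edetr_eq r h (by omega) (by omega), numP_div_denP hlam, denP_split r h hr (by omega)]
  have h1 : denP lam n (h-r) ≠ 0 := (denP_pos hlam _).ne'
  have h2 : (∏ i ∈ Finset.range (r-1), (lam*n + 1 + ((h-r+i : ℕ):ℝ))) ≠ 0 := by
    apply ne_of_gt; apply Finset.prod_pos; intro i _; positivity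
  field_simp

lemma choose_fact (h r : ℕ) (hrh : r ≤ h) :
    ((h.choose r : ℝ)) * (r.factorial : ℝ) = ∏ i ∈ Finset.range r, ((h:ℝ) - i) := by
  have h1 : ((h.descFactorial r : ℕ) : ℝ) = ∏ i ∈ Finset.range r, ((h:ℝ) - i) := by
    rw [Nat.descFactorial_eq_prod_range, Nat.cast_prod]
    apply Finset.prod_congr rfl
    intro i hi
    have hih : i ≤ h := le_trans (le_of_lt (Finset.mem_range.mp hi)) hrh
    push_cast [Nat.cast_sub hih]
    ring
  rw [← h1, Nat.descFactorial_eq_factorial_mul_choose]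
  push_cast
  ring

lemma Elim_pos (ha0 : 0 ≤ a) (ha1 : a < 1) (hlam : 0 < lam) (r : ℕ) (hr : 1 ≤ r)
    (x : ℝ) (hx : 0 < x) (hx1 : x ≤ 1) :
    Tendsto (fun n : ℕ => Edet a lam n r ⌊x * (n:ℝ)⌋₊ / n) atTop
      (𝓝 (cprod a r * ((lam+x)/lam)^(a-1)
        * (x^r / ((r.factorial:ℝ) * (lam+x)^(r-1))))) := by
  have hQ : Tendsto (fun n : ℕ =>
      ∏ j ∈ Finset.range (⌊x * (n:ℝ)⌋₊ - r), (1 + (a-1)/(lam*n + 1 + j)))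
      atTop (𝓝 (((lam+x)/lam) ^ (a-1))) :=
    prod_tendsto lam x (a-1) hlam (by rw [abs_le]; constructor <;> linarith)
      (fun n => ⌊x * (n:ℝ)⌋₊ - r)
      (fun n => by have := floor_le_n x hx1 n; show ⌊x*(n:ℝ)⌋₊ - r ≤ n; omega)
      (floor_sub_div_tendsto x hx r)
  have hNum : Tendsto (fun n : ℕ =>
      ∏ i ∈ Finset.range r, (((⌊x * (n:ℝ)⌋₊ : ℝ) - i)/n)) atTop (𝓝 (x ^ r)) := by
    have hmain := tendsto_finset_prod (Finset.range r)
      (f := fun (i : ℕ) (n : ℕ) => ((⌊x * (n:ℝ)⌋₊ : ℝ) - i)/(n:ℝ)) (a := fun _ => x)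
      (fun i _ => by
        have h1 : Tendsto (fun n : ℕ => ((⌊x * (n:ℝ)⌋₊:ℝ))/n - (i:ℝ)/n) atTop (𝓝 (x - 0)) :=
          (floor_div_tendsto x hx.le).sub (const_div_tendsto i)
        rw [sub_zero] at h1
        apply h1.congr; intro n; ring)
    simpa [Finset.prod_const] using hmain
  have hfac : ∀ i : ℕ, Tendsto (fun n : ℕ =>
      (lam*(n:ℝ) + (1 + ((⌊x * (n:ℝ)⌋₊ : ℝ) - r + i)))/n) atTop (𝓝 (lam+x)) := by
    intro i
    have h2 : Tendsto (fun n : ℕ =>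
        lam + (1/(n:ℝ) + (((⌊x * (n:ℝ)⌋₊:ℝ))/n - (r:ℝ)/n + (i:ℝ)/n))) atTop
        (𝓝 (lam + (0 + (x - 0 + 0)))) :=
      tendsto_const_nhds.add ((const_div_tendsto 1).add
        (((floor_div_tendsto x hx.le).sub (const_div_tendsto r)).add (const_div_tendsto i)))
    norm_num at h2
    apply h2.congr'
    filter_upwards [eventually_gt_atTop 0] with n hn
    have hn0 : (0:ℝ) < n := by exact_mod_cast hn
    field_simp
  have hDen : Tendsto (fun n : ℕ =>
      ∏ i ∈ Finset.range (r-1), ((lam*(n:ℝ) + (1 + ((⌊x * (n:ℝ)⌋₊ : ℝ) - r + i)))/n))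
      atTop (𝓝 ((lam + x)^(r-1))) := by
    have hmain := tendsto_finset_prod (Finset.range (r-1))
      (f := fun (i : ℕ) (n : ℕ) => (lam*(n:ℝ) + (1 + ((⌊x * (n:ℝ)⌋₊ : ℝ) - r + i)))/n)
      (a := fun _ => lam + x) (fun i _ => hfac i)
    simpa [Finset.prod_const] using hmain
  have hL : (0:ℝ) < lam + x := by linarith
  have hden_ne : ((r.factorial:ℝ) * (lam+x)^(r-1)) ≠ 0 := by positivity
  have hcomb : Tendsto (fun n : ℕ =>
      cprod a r * (∏ j ∈ Finset.range (⌊x * (n:ℝ)⌋₊ - r), (1 + (a-1)/(lam*n + 1 + j)))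
      * ((∏ i ∈ Finset.range r, (((⌊x * (n:ℝ)⌋₊ : ℝ) - i)/n))
        / ((r.factorial:ℝ)
          * ∏ i ∈ Finset.range (r-1), ((lam*(n:ℝ) + (1 + ((⌊x * (n:ℝ)⌋₊ : ℝ) - r + i)))/n))))
      atTop (𝓝 (cprod a r * ((lam+x)/lam)^(a-1)
        * (x^r / ((r.factorial:ℝ) * (lam+x)^(r-1))))) :=
    ((tendsto_const_nhds.mul hQ)).mul (hNum.div (tendsto_const_nhds.mul hDen) hden_ne)
  apply hcomb.congr'
  filter_upwards [eventually_gt_atTop 0, floor_event_ge x hx (r+1)] with n hn hfl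
  have hn0 : (0:ℝ) < n := by exact_mod_cast hn
  rw [Edet_factor hlam r ⌊x * (n:ℝ)⌋₊ hr hfl]
  have hrh : r ≤ ⌊x * (n:ℝ)⌋₊ := by omega
  have hc := choose_fact ⌊x * (n:ℝ)⌋₊ r hrh
  have hB : (∏ i ∈ Finset.range (r-1), (lam*(n:ℝ) + 1 + ((⌊x * (n:ℝ)⌋₊-r+i : ℕ):ℝ)))
      = ∏ i ∈ Finset.range (r-1), (lam*(n:ℝ) + (1 + ((⌊x * (n:ℝ)⌋₊ : ℝ) - r + i))) := by
    apply Finset.prod_congr rfl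
    intro i _
    push_cast [Nat.cast_sub hrh]
    ring
  have hBpos : (0:ℝ) < ∏ i ∈ Finset.range (r-1),
      (lam*(n:ℝ) + (1 + ((⌊x * (n:ℝ)⌋₊ : ℝ) - r + i))) := by
    rw [← hB]
    apply Finset.prod_pos; intro i _; positivity
  have hNum_eq : (∏ i ∈ Finset.range r, (((⌊x * (n:ℝ)⌋₊ : ℝ) - i)/n))
      = (∏ i ∈ Finset.range r, ((⌊x * (n:ℝ)⌋₊ : ℝ) - i))/(n:ℝ)^r := by
    rw [Finset.prod_div_distrib, Finset.prod_const, Finset.card_range]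
  have hDen_eq : (∏ i ∈ Finset.range (r-1),
        ((lam*(n:ℝ) + (1 + ((⌊x * (n:ℝ)⌋₊ : ℝ) - r + i)))/n))
      = (∏ i ∈ Finset.range (r-1), (lam*(n:ℝ) + (1 + ((⌊x * (n:ℝ)⌋₊ : ℝ) - r + i))))
        /(n:ℝ)^(r-1) := by
    rw [Finset.prod_div_distrib, Finset.prod_const, Finset.card_range]
  have hpow : (n:ℝ)^r = (n:ℝ)^(r-1) * n := by
    rw [← pow_succ]; congr 1; omega
  rw [hNum_eq, hDen_eq, hB, hpow, ← hc]
  have hfacne : (r.factorial : ℝ) ≠ 0 := by positivity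
  field_simp

lemma mFun_pos_eq (ha1 : a < 1) (hlam : 0 < lam) (r : ℕ) (hr : 1 ≤ r) (x : ℝ) (hx : 0 < x) :
    cprod a r * ((lam+x)/lam)^(a-1) * (x^r / ((r.factorial:ℝ) * (lam+x)^(r-1)))
      = mFun a lam r x := by
  unfold mFun cprod
  rw [if_neg (by omega)]
  have hL : (0:ℝ) < lam + x := by linarith
  have h1 : ((lam+x)/lam)^(a-1) = (lam+x)^(a-1) * (lam:ℝ)^(1-a) := by
    rw [Real.div_rpow hL.le hlam.le, div_eq_mul_inv, ← Real.rpow_neg hlam.le, neg_sub]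
  have h2 : ((lam+x):ℝ)^(a-1) = (x+lam)^(a-(r:ℝ)) * (lam+x)^((r-1 : ℕ)) := by
    rw [add_comm x lam, ← Real.rpow_natCast (lam+x) (r-1), ← Real.rpow_add hL]
    congr 1
    push_cast [Nat.cast_sub hr]
    ring
  rw [h1, h2]
  have hfacne : (r.factorial : ℝ) ≠ 0 := by positivity
  have hpowne : ((lam+x):ℝ)^((r-1:ℕ)) ≠ 0 := by positivity
  field_simp

lemma mFun_zero_val (hlam : 0 < lam) (r : ℕ) : mFun a lam r 0 = 0 := by
  unfold mFun
  rcases Nat.eq_zero_or_pos r with rfl | hr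
  · by_cases ha : a = 0
    · simp [ha, div_self hlam.ne']
    · simp [ha, div_self hlam.ne', Real.one_rpow]
  · rw [if_neg (by omega), zero_pow (by omega)]
    ring

lemma Elim_all (ha0 : 0 ≤ a) (ha1 : a < 1) (hlam : 0 < lam) (r : ℕ) (x : ℝ)
    (hx : 0 < x) (hx1 : x ≤ 1) :
    Tendsto (fun n : ℕ => Edet a lam n r ⌊x * (n:ℝ)⌋₊ / n) atTop (𝓝 (mFun a lam r x)) := by
  rcases Nat.eq_zero_or_pos r with rfl | hr
  · by_cases ha : a = 0
    · subst ha
      have := Elim_zero_a0 hlam x hx hx1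
      simpa [mFun] using this
    · have := Elim_zero_apos ha (by rw [abs_le]; constructor <;> linarith) hlam x hx hx1
      have heq : mFun a lam 0 x = (lam/a) * (((lam + x)/lam) ^ a - 1) := by
        simp [mFun, ha]
      rw [heq]
      exact this
  · rw [← mFun_pos_eq ha1 hlam r hr x hx]
    exact Elim_pos ha0 ha1 hlam r hr x hx hx1

end EPaux

/-- uniform convergence of the rescaled means along the array:
`sup_{x ∈ [0,1]} |E[K^{(n)}_{r,⌊xn⌋}]/n − m_r(x)| → 0`. -/
theorem ewensPitman_mean_tendstoUniformly
    (a lam : ℝ) (ha0 : 0 ≤ a) (ha1 : a < 1) (hlam : 0 < lam)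
    {Ω : Type*} [MeasurableSpace Ω] (A : CRPArray a lam Ω) (r : ℕ) :
    TendstoUniformlyOn
      (fun (n : ℕ) (x : ℝ) => (∫ ω, ((A.K n r (⌊x * (n : ℝ)⌋₊) ω : ℝ)) ∂A.P) / (n : ℝ))
      (fun x => mFun a lam r x) atTop (Set.Icc 0 1) := by
  have hfeq : ∀ (n : ℕ) (x : ℝ), (∫ ω, ((A.K n r (⌊x * (n : ℝ)⌋₊) ω : ℝ)) ∂A.P) / (n : ℝ)
      = EPaux.II A n r ⌊x * (n : ℝ)⌋₊ / n := fun n x => rfl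
  apply EPaux.crit
  · -- asymptotic equicontinuity
    filter_upwards [eventually_ge_atTop 1] with n hn1
    intro x hx y hy
    rw [hfeq, hfeq]
    have hn0 : (0:ℝ) < n := by exact_mod_cast hn1
    have hxf := EPaux.floor_le_n x hx.2 n
    have hyf := EPaux.floor_le_n y hy.2 n
    have hdist := EPaux.II_dist A n hn1 r ⌊y * (n:ℝ)⌋₊ ⌊x * (n:ℝ)⌋₊ hyf hxf
    have hfloor : |(⌊x * (n:ℝ)⌋₊ : ℝ) - (⌊y * (n:ℝ)⌋₊ : ℝ)| ≤ |x - y| * n + 1 := by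
      have h1 : (⌊x * (n:ℝ)⌋₊ : ℝ) ≤ x * n := Nat.floor_le (by
        have := hx.1; positivity)
      have h2 : x * n < (⌊x * (n:ℝ)⌋₊ : ℝ) + 1 := Nat.lt_floor_add_one _
      have h3 : (⌊y * (n:ℝ)⌋₊ : ℝ) ≤ y * n := Nat.floor_le (by
        have := hy.1; positivity)
      have h4 : y * n < (⌊y * (n:ℝ)⌋₊ : ℝ) + 1 := Nat.lt_floor_add_one _
      have h5 : (x - y) * n ≤ |x - y| * n :=
        mul_le_mul_of_nonneg_right (le_abs_self _) hn0.le
      have h6 : (y - x) * n ≤ |x - y| * n := by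
        rw [abs_sub_comm]
        exact mul_le_mul_of_nonneg_right (le_abs_self _) hn0.le
      rw [abs_le]
      constructor <;> nlinarith
    calc |EPaux.II A n r ⌊x * (n:ℝ)⌋₊ / n - EPaux.II A n r ⌊y * (n:ℝ)⌋₊ / n|
        = |EPaux.II A n r ⌊x * (n:ℝ)⌋₊ - EPaux.II A n r ⌊y * (n:ℝ)⌋₊| / n := by
          rw [div_sub_div_same, abs_div, abs_of_pos hn0]
      _ ≤ (|x - y| * n + 1) / n := by
          gcongr
          exact hdist.trans hfloor
      _ = |x - y| + 1/n := by field_simp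
  · -- pointwise convergence
    intro x hx
    rcases eq_or_lt_of_le hx.1 with hx0 | hx0
    · have hm0 : mFun a lam r x = 0 := by
        rw [← hx0]; exact EPaux.mFun_zero_val hlam r
      rw [hm0]
      have hzero : ∀ n : ℕ, (∫ ω, ((A.K n r (⌊x * (n : ℝ)⌋₊) ω : ℝ)) ∂A.P) / (n : ℝ) = 0 := by
        intro n
        rw [hfeq, ← hx0]
        norm_num [EPaux.II_zero]
      exact tendsto_const_nhds.congr (fun n => (hzero n).symm)
    · have hEl := EPaux.Elim_all ha0 ha1 hlam r x hx0 hx.2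
      apply hEl.congr'
      filter_upwards [eventually_ge_atTop 1, EPaux.floor_event_ge x hx0 1] with n hn1 hfl
      rw [hfeq,
        EPaux.I_eq_Edet A hlam n hn1 ⌊x*(n:ℝ)⌋₊ hfl (EPaux.floor_le_n x hx.2 n) r]

end
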